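/- Fix δ ∈ ℝ. There exists a constant C > 0 such that for every v ∈ V and every u ∈ H, the sequence B(u,v) belongs to H and |B(u,v)|_H ≤ C ||v||_V |u|_H, where B is the Sabra bilinear operator with parameter δ. -/
import Mathlib


open ComplexConjugate

noncomputable section

/-- Extension of a sequence `(u_n)_{n ≥ 1}` to integer indices, with the boundary
convention `u_m = 0` for `m ≤ 0` (in particular `u_0 = u_{-1} = 0`). -/
def ext (u : ℕ → ℂ) : ℤ → ℂ := fun m => if 1 ≤ m then u m.toNat else 0

/-- Wave numbers `k_n = k₀ 2^n`. -/
def kseq (k₀ : ℝ) (n : ℤ) : ℝ := k₀ * 2 ^ n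

/-- The Sabra bilinear operator with parameter `δ`. -/
def sabraB (k₀ δ : ℝ) (u v : ℕ → ℂ) : ℕ → ℂ := fun n =>
  (Complex.I / 3) * (kseq k₀ ((n : ℤ) + 1)) *
      ((1 + (δ : ℂ)) * conj (ext v ((n : ℤ) + 1)) * ext u ((n : ℤ) + 2)
        + (2 - (δ : ℂ)) * conj (ext u ((n : ℤ) + 1)) * ext v ((n : ℤ) + 2))
  + (Complex.I / 3) * (kseq k₀ (n : ℤ)) *
      ((1 - 2 * (δ : ℂ)) * conj (ext u ((n : ℤ) - 1)) * ext v ((n : ℤ) + 1)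
        - (1 + (δ : ℂ)) * conj (ext v ((n : ℤ) - 1)) * ext u ((n : ℤ) + 1))
  + (Complex.I / 3) * (kseq k₀ ((n : ℤ) - 1)) *
      ((2 - (δ : ℂ)) * ext u ((n : ℤ) - 1) * ext v ((n : ℤ) - 2)
        + (1 - 2 * (δ : ℂ)) * ext u ((n : ℤ) - 2) * ext v ((n : ℤ) - 1))

/-- Membership in `H`: square-summability over `n ≥ 1`. -/
def memH (u : ℕ → ℂ) : Prop := Summable (fun n : ℕ => ‖u (n + 1)‖ ^ 2)

/-- The `H`-norm `|u|_H = (∑_{n ≥ 1} |u_n|²)^{1/2}`. -/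
def normH (u : ℕ → ℂ) : ℝ := Real.sqrt (∑' n : ℕ, ‖u (n + 1)‖ ^ 2)

/-- Membership in `V`: `u ∈ H` and `∑_{n ≥ 1} k_n² |u_n|² < ∞`. -/
def memV (k₀ : ℝ) (u : ℕ → ℂ) : Prop :=
  memH u ∧ Summable (fun n : ℕ => (kseq k₀ (n + 1)) ^ 2 * ‖u (n + 1)‖ ^ 2)

/-- The `V`-norm `‖u‖_V = (∑_{n ≥ 1} k_n² |u_n|²)^{1/2}`. -/
def normV (k₀ : ℝ) (u : ℕ → ℂ) : ℝ :=
  Real.sqrt (∑' n : ℕ, (kseq k₀ (n + 1)) ^ 2 * ‖u (n + 1)‖ ^ 2)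

section Aux

lemma ext_zero (u : ℕ → ℂ) {m : ℤ} (hm : ¬ 1 ≤ m) : ext u m = 0 := if_neg hm

lemma extNat_eq (u : ℕ → ℂ) (n : ℕ) : ext u ((n : ℤ) + 1) = u (n + 1) := by
  rw [ext, if_pos (by omega)]
  congr 1

lemma kseq_pos {k₀ : ℝ} (hk₀ : 0 < k₀) (n : ℤ) : 0 < kseq k₀ n :=
  mul_pos hk₀ (zpow_pos (by norm_num) n)

lemma normV_nonneg (k₀ : ℝ) (v : ℕ → ℂ) : 0 ≤ normV k₀ v := Real.sqrt_nonneg _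

lemma normH_nonneg (u : ℕ → ℂ) : 0 ≤ normH u := Real.sqrt_nonneg _

/-- Key weighted bound: `k_b ‖v_b‖ ≤ ‖v‖_V` for every integer index `b`. -/
lemma kseq_mul_ext_le {k₀ : ℝ} (hk₀ : 0 < k₀) {v : ℕ → ℂ} (hv : memV k₀ v) (b : ℤ) :
    kseq k₀ b * ‖ext v b‖ ≤ normV k₀ v := by
  by_cases hb : 1 ≤ b
  · obtain ⟨n, rfl⟩ : ∃ n : ℕ, b = (n : ℤ) + 1 := ⟨(b - 1).toNat, by omega⟩
    have h2 : kseq k₀ ((n : ℤ) + 1) ^ 2 * ‖v (n + 1)‖ ^ 2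
        ≤ ∑' m : ℕ, kseq k₀ ((m : ℤ) + 1) ^ 2 * ‖v (m + 1)‖ ^ 2 :=
      Summable.le_tsum hv.2 n fun m _ => by positivity
    rw [extNat_eq, normV]
    have hk := kseq_pos hk₀ ((n : ℤ) + 1)
    rw [Real.le_sqrt (by positivity) (tsum_nonneg fun m => by positivity)]
    calc (kseq k₀ ((n : ℤ) + 1) * ‖v (n + 1)‖) ^ 2
        = kseq k₀ ((n : ℤ) + 1) ^ 2 * ‖v (n + 1)‖ ^ 2 := by ring
      _ ≤ _ := h2
  · rw [ext_zero v hb, norm_zero, mul_zero]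
    exact normV_nonneg _ _

/-- If `a ≤ b + 1` then `k_a ‖v_b‖ ≤ 2 ‖v‖_V`. -/
lemma kseq_mul_ext_le' {k₀ : ℝ} (hk₀ : 0 < k₀) {v : ℕ → ℂ} (hv : memV k₀ v) {a b : ℤ}
    (hab : a ≤ b + 1) : kseq k₀ a * ‖ext v b‖ ≤ 2 * normV k₀ v := by
  have h1 : kseq k₀ a ≤ 2 * kseq k₀ b := by
    rw [kseq, kseq]
    have h2 : (2 : ℝ) ^ a ≤ (2 : ℝ) ^ (b + 1) :=
      zpow_le_zpow_right₀ (by norm_num) hab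
    have h3 : ((2 : ℝ)) ^ (b + 1) = 2 * 2 ^ b := by
      rw [zpow_add₀ (two_ne_zero), zpow_one]; ring
    calc k₀ * 2 ^ a ≤ k₀ * (2 * 2 ^ b) :=
          mul_le_mul_of_nonneg_left (h3 ▸ h2) hk₀.le
      _ = 2 * (k₀ * 2 ^ b) := by ring
  calc kseq k₀ a * ‖ext v b‖ ≤ 2 * kseq k₀ b * ‖ext v b‖ :=
        mul_le_mul_of_nonneg_right h1 (norm_nonneg _)
    _ = 2 * (kseq k₀ b * ‖ext v b‖) := by ring
    _ ≤ 2 * normV k₀ v := by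
        have := kseq_mul_ext_le hk₀ hv b
        linarith

/-- The square-norm sequence of `ext u`, indexed by `ℤ`. -/
def extSq (u : ℕ → ℂ) : ℤ → ℝ := fun m => ‖ext u m‖ ^ 2

lemma extSq_comp (u : ℕ → ℂ) : ∀ n : ℕ, extSq u ((n : ℤ) + 1) = ‖u (n + 1)‖ ^ 2 := by
  intro n
  rw [extSq, extNat_eq]

lemma extSq_zero (u : ℕ → ℂ) :
    ∀ m ∉ Set.range (fun n : ℕ => (n : ℤ) + 1), extSq u m = 0 := by
  intro m hm
  have h : ¬ 1 ≤ m := by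
    intro h
    exact hm ⟨(m - 1).toNat, by simp; omega⟩
  rw [extSq, ext_zero u h]
  simp

lemma extSq_support (u : ℕ → ℂ) :
    Function.support (extSq u) ⊆ Set.range (fun n : ℕ => (n : ℤ) + 1) := by
  intro m hm
  by_contra h
  exact hm (extSq_zero u m h)

lemma inj_aux : Function.Injective (fun n : ℕ => (n : ℤ) + 1) := by
  intro a b h
  simpa using h

lemma extSq_summable {u : ℕ → ℂ} (hu : memH u) : Summable (extSq u) := by
  rw [← Function.Injective.summable_iff inj_aux (extSq_zero u)]
  have h : (extSq u) ∘ (fun n : ℕ => (n : ℤ) + 1) = fun n : ℕ => ‖u (n + 1)‖ ^ 2 := by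
    funext n
    exact extSq_comp u n
  rw [h]
  exact hu

lemma extSq_tsum {u : ℕ → ℂ} : ∑' m : ℤ, extSq u m = ∑' n : ℕ, ‖u (n + 1)‖ ^ 2 := by
  rw [← Function.Injective.tsum_eq inj_aux (extSq_support u)]
  exact tsum_congr (extSq_comp u)

lemma shift_summable_int {u : ℕ → ℂ} (hu : memH u) (j : ℤ) :
    Summable (fun m : ℤ => extSq u (m + j)) :=
  (extSq_summable hu).comp_injective (add_left_injective j)

/-- Shifted sums of squares: summability. -/
lemma shift_summable {u : ℕ → ℂ} (hu : memH u) (j : ℤ) :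
    Summable (fun n : ℕ => ‖ext u ((n : ℤ) + 1 + j)‖ ^ 2) :=
  (shift_summable_int hu j).comp_injective inj_aux

/-- Shifted sums of squares: the tsum bound. -/
lemma shift_tsum_le {u : ℕ → ℂ} (hu : memH u) (j : ℤ) :
    ∑' n : ℕ, ‖ext u ((n : ℤ) + 1 + j)‖ ^ 2 ≤ ∑' n : ℕ, ‖u (n + 1)‖ ^ 2 := by
  have h1 := shift_summable_int hu j
  have h2 : ∑' m : ℤ, extSq u (m + j) = ∑' m : ℤ, extSq u m :=
    Equiv.tsum_eq (Equiv.addRight j) (extSq u)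
  calc ∑' n : ℕ, ‖ext u ((n : ℤ) + 1 + j)‖ ^ 2
      ≤ ∑' m : ℤ, extSq u (m + j) :=
        Summable.tsum_le_tsum_of_inj (fun n : ℕ => (n : ℤ) + 1) inj_aux
          (fun c _ => sq_nonneg _) (fun n => le_of_eq rfl)
          (h1.comp_injective inj_aux) h1
    _ = ∑' n : ℕ, ‖u (n + 1)‖ ^ 2 := by rw [h2, extSq_tsum]

end Aux

section Main

lemma prod3_le {x X y Y z : ℝ} (hx : 0 ≤ x) (hX : x ≤ X) (hy : 0 ≤ y) (hY : y ≤ Y)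
    (hz : 0 ≤ z) : x * y * z ≤ X * Y * z :=
  mul_le_mul_of_nonneg_right (mul_le_mul hX hY hy (hx.trans hX)) hz

lemma group_bound {k₀ : ℝ} (hk₀ : 0 < k₀) {v : ℕ → ℂ} (hv : memV k₀ v)
    {α β1 β2 : ℤ} (h1 : α ≤ β1 + 1) (h2 : α ≤ β2 + 1) {D : ℝ}
    {c1 c2 : ℂ} (hc1 : ‖c1‖ ≤ D) (hc2 : ‖c2‖ ≤ D) (x1 x2 w : ℂ)
    (hw : ‖w‖ ≤ ‖c1‖ * ‖ext v β1‖ * ‖x1‖ + ‖c2‖ * ‖ext v β2‖ * ‖x2‖) :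
    ‖(Complex.I / 3) * ((kseq k₀ α : ℝ) : ℂ) * w‖ ≤
      1 / 3 * (D * (2 * normV k₀ v) * ‖x1‖ + D * (2 * normV k₀ v) * ‖x2‖) := by
  have hk := kseq_pos hk₀ α
  have h13 : ‖(Complex.I / 3 : ℂ)‖ = 1 / 3 := by
    rw [norm_div, Complex.norm_I]
    norm_num
  have hkc : ‖((kseq k₀ α : ℝ) : ℂ)‖ = kseq k₀ α := by
    rw [Complex.norm_real]
    exact abs_of_pos hk
  have m1 : kseq k₀ α * (‖c1‖ * ‖ext v β1‖ * ‖x1‖) ≤ D * (2 * normV k₀ v) * ‖x1‖ := by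
    calc kseq k₀ α * (‖c1‖ * ‖ext v β1‖ * ‖x1‖)
        = ‖c1‖ * (kseq k₀ α * ‖ext v β1‖) * ‖x1‖ := by ring
      _ ≤ D * (2 * normV k₀ v) * ‖x1‖ :=
          prod3_le (norm_nonneg _) hc1 (by positivity) (kseq_mul_ext_le' hk₀ hv h1)
            (norm_nonneg _)
  have m2 : kseq k₀ α * (‖c2‖ * ‖ext v β2‖ * ‖x2‖) ≤ D * (2 * normV k₀ v) * ‖x2‖ := by
    calc kseq k₀ α * (‖c2‖ * ‖ext v β2‖ * ‖x2‖)
        = ‖c2‖ * (kseq k₀ α * ‖ext v β2‖) * ‖x2‖ := by ring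
      _ ≤ D * (2 * normV k₀ v) * ‖x2‖ :=
          prod3_le (norm_nonneg _) hc2 (by positivity) (kseq_mul_ext_le' hk₀ hv h2)
            (norm_nonneg _)
  calc ‖(Complex.I / 3) * ((kseq k₀ α : ℝ) : ℂ) * w‖
      = 1 / 3 * (kseq k₀ α * ‖w‖) := by
        rw [norm_mul, norm_mul, h13, hkc]; ring
    _ ≤ 1 / 3 * (kseq k₀ α * (‖c1‖ * ‖ext v β1‖ * ‖x1‖ + ‖c2‖ * ‖ext v β2‖ * ‖x2‖)) := by
        have := mul_le_mul_of_nonneg_left hw hk.le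
        linarith
    _ = 1 / 3 * (kseq k₀ α * (‖c1‖ * ‖ext v β1‖ * ‖x1‖)
          + kseq k₀ α * (‖c2‖ * ‖ext v β2‖ * ‖x2‖)) := by ring
    _ ≤ _ := by linarith

/-- Pointwise bound for the Sabra operator. -/
lemma sabra_pointwise (k₀ δ : ℝ) (hk₀ : 0 < k₀) (u v : ℕ → ℂ) (hv : memV k₀ v) (N : ℕ) :
    ‖sabraB k₀ δ u v N‖ ≤
      4 * (‖(1 : ℂ) + (δ : ℂ)‖ + ‖(2 : ℂ) - (δ : ℂ)‖ + ‖(1 : ℂ) - 2 * (δ : ℂ)‖ + 1)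
        * normV k₀ v *
        (‖ext u ((N : ℤ) + 2)‖ + ‖ext u ((N : ℤ) + 1)‖ + ‖ext u ((N : ℤ) - 1)‖
          + ‖ext u ((N : ℤ) - 2)‖) := by
  set M : ℤ := (N : ℤ) with hM
  set D : ℝ := ‖(1 : ℂ) + (δ : ℂ)‖ + ‖(2 : ℂ) - (δ : ℂ)‖ + ‖(1 : ℂ) - 2 * (δ : ℂ)‖ + 1
    with hD
  have hn1 := norm_nonneg ((1 : ℂ) + (δ : ℂ))
  have hn2 := norm_nonneg ((2 : ℂ) - (δ : ℂ))
  have hn3 := norm_nonneg ((1 : ℂ) - 2 * (δ : ℂ))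
  have hD0 : 0 ≤ D := by rw [hD]; linarith
  have hc1 : ‖(1 : ℂ) + (δ : ℂ)‖ ≤ D := by rw [hD]; linarith
  have hc2 : ‖(2 : ℂ) - (δ : ℂ)‖ ≤ D := by rw [hD]; linarith
  have hc3 : ‖(1 : ℂ) - 2 * (δ : ℂ)‖ ≤ D := by rw [hD]; linarith
  have hNv0 : 0 ≤ normV k₀ v := normV_nonneg _ _
  have ha := norm_nonneg (ext u (M + 2))
  have hb := norm_nonneg (ext u (M + 1))
  have hc := norm_nonneg (ext u (M - 1))
  have hd := norm_nonneg (ext u (M - 2))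
  have g1 : ‖(Complex.I / 3) * ((kseq k₀ (M + 1) : ℝ) : ℂ) *
      ((1 + (δ : ℂ)) * conj (ext v (M + 1)) * ext u (M + 2)
        + (2 - (δ : ℂ)) * conj (ext u (M + 1)) * ext v (M + 2))‖ ≤
      1 / 3 * (D * (2 * normV k₀ v) * ‖ext u (M + 2)‖
        + D * (2 * normV k₀ v) * ‖ext u (M + 1)‖) := by
    refine group_bound (β1 := M + 1) (β2 := M + 2) hk₀ hv (by omega) (by omega) hc1 hc2 _ _ _ ?_
    refine (norm_add_le _ _).trans (le_of_eq ?_)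
    simp only [norm_mul, RCLike.norm_conj]
    ring
  have g2 : ‖(Complex.I / 3) * ((kseq k₀ M : ℝ) : ℂ) *
      ((1 - 2 * (δ : ℂ)) * conj (ext u (M - 1)) * ext v (M + 1)
        - (1 + (δ : ℂ)) * conj (ext v (M - 1)) * ext u (M + 1))‖ ≤
      1 / 3 * (D * (2 * normV k₀ v) * ‖ext u (M - 1)‖
        + D * (2 * normV k₀ v) * ‖ext u (M + 1)‖) := by
    refine group_bound (β1 := M + 1) (β2 := M - 1) hk₀ hv (by omega) (by omega) hc3 hc1 _ _ _ ?_
    refine (norm_sub_le _ _).trans (le_of_eq ?_)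
    simp only [norm_mul, RCLike.norm_conj]
    ring
  have g3 : ‖(Complex.I / 3) * ((kseq k₀ (M - 1) : ℝ) : ℂ) *
      ((2 - (δ : ℂ)) * ext u (M - 1) * ext v (M - 2)
        + (1 - 2 * (δ : ℂ)) * ext u (M - 2) * ext v (M - 1))‖ ≤
      1 / 3 * (D * (2 * normV k₀ v) * ‖ext u (M - 1)‖
        + D * (2 * normV k₀ v) * ‖ext u (M - 2)‖) := by
    refine group_bound (β1 := M - 2) (β2 := M - 1) hk₀ hv (by omega) (by omega) hc2 hc3 _ _ _ ?_
    refine (norm_add_le _ _).trans (le_of_eq ?_)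
    simp only [norm_mul, RCLike.norm_conj]
    ring
  have htri : ‖sabraB k₀ δ u v N‖ ≤
      ‖(Complex.I / 3) * ((kseq k₀ (M + 1) : ℝ) : ℂ) *
        ((1 + (δ : ℂ)) * conj (ext v (M + 1)) * ext u (M + 2)
          + (2 - (δ : ℂ)) * conj (ext u (M + 1)) * ext v (M + 2))‖
      + ‖(Complex.I / 3) * ((kseq k₀ M : ℝ) : ℂ) *
        ((1 - 2 * (δ : ℂ)) * conj (ext u (M - 1)) * ext v (M + 1)
          - (1 + (δ : ℂ)) * conj (ext v (M - 1)) * ext u (M + 1))‖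
      + ‖(Complex.I / 3) * ((kseq k₀ (M - 1) : ℝ) : ℂ) *
        ((2 - (δ : ℂ)) * ext u (M - 1) * ext v (M - 2)
          + (1 - 2 * (δ : ℂ)) * ext u (M - 2) * ext v (M - 1))‖ := by
    rw [sabraB]
    exact norm_add₃_le
  have P1 : 0 ≤ D * normV k₀ v * ‖ext u (M + 2)‖ := by positivity
  have P2 : 0 ≤ D * normV k₀ v * ‖ext u (M + 1)‖ := by positivity
  have P3 : 0 ≤ D * normV k₀ v * ‖ext u (M - 1)‖ := by positivity
  have P4 : 0 ≤ D * normV k₀ v * ‖ext u (M - 2)‖ := by positivity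
  have : ‖sabraB k₀ δ u v N‖ ≤
      4 * D * normV k₀ v * (‖ext u (M + 2)‖ + ‖ext u (M + 1)‖ + ‖ext u (M - 1)‖
        + ‖ext u (M - 2)‖) := by nlinarith [htri, g1, g2, g3]
  exact this

end Main

/-- There is `C > 0` such that for every `v ∈ V` and `u ∈ H`, `B(u,v) ∈ H` and
`|B(u,v)|_H ≤ C ‖v‖_V |u|_H`, where `B` is the Sabra bilinear operator with parameter `δ`. -/
theorem sabra_estimate_HV (k₀ δ : ℝ) (hk₀ : 0 < k₀) :
    ∃ C : ℝ, 0 < C ∧ ∀ u v : ℕ → ℂ, memH u → memV k₀ v →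
      memH (sabraB k₀ δ u v) ∧ normH (sabraB k₀ δ u v) ≤ C * normV k₀ v * normH u := by
  refine ⟨16 * (‖(1 : ℂ) + (δ : ℂ)‖ + ‖(2 : ℂ) - (δ : ℂ)‖ + ‖(1 : ℂ) - 2 * (δ : ℂ)‖ + 1),
    by positivity, ?_⟩
  intro u v hu hv
  set D : ℝ := ‖(1 : ℂ) + (δ : ℂ)‖ + ‖(2 : ℂ) - (δ : ℂ)‖ + ‖(1 : ℂ) - 2 * (δ : ℂ)‖ + 1
    with hD
  have hD0 : 0 ≤ D := by positivity
  set Nv : ℝ := normV k₀ v with hNv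
  have hNv0 : 0 ≤ Nv := normV_nonneg _ _
  set K : ℝ := 4 * D * Nv with hK
  have hK0 : 0 ≤ K := by positivity
  set T : ℕ → ℝ := fun n => ‖ext u ((n : ℤ) + 1 + 2)‖ ^ 2 + ‖ext u ((n : ℤ) + 1 + 1)‖ ^ 2
      + ‖ext u ((n : ℤ) + 1 + (-1))‖ ^ 2 + ‖ext u ((n : ℤ) + 1 + (-2))‖ ^ 2 with hT
  have s2 := shift_summable hu 2
  have s1 := shift_summable hu 1
  have sm1 := shift_summable hu (-1)
  have sm2 := shift_summable hu (-2)
  have hTsummable : Summable T := ((s2.add s1).add sm1).add sm2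
  have h' : ∀ n : ℕ, ‖sabraB k₀ δ u v (n + 1)‖ ^ 2 ≤ K ^ 2 * 4 * T n := by
    intro n
    have hp := sabra_pointwise k₀ δ hk₀ u v hv (n + 1)
    have e1 : (((n + 1 : ℕ)) : ℤ) + 2 = (n : ℤ) + 1 + 2 := by push_cast; ring
    have e2 : (((n + 1 : ℕ)) : ℤ) + 1 = (n : ℤ) + 1 + 1 := by push_cast; ring
    have e3 : (((n + 1 : ℕ)) : ℤ) - 1 = (n : ℤ) + 1 + (-1) := by push_cast; ring
    have e4 : (((n + 1 : ℕ)) : ℤ) - 2 = (n : ℤ) + 1 + (-2) := by push_cast; ring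
    rw [e1, e2, e3, e4, ← hD, ← hNv, ← hK] at hp
    set a := ‖ext u ((n : ℤ) + 1 + 2)‖ with hae
    set b := ‖ext u ((n : ℤ) + 1 + 1)‖ with hbe
    set c := ‖ext u ((n : ℤ) + 1 + (-1))‖ with hce
    set d := ‖ext u ((n : ℤ) + 1 + (-2))‖ with hde
    have ha : 0 ≤ a := norm_nonneg _
    have hb : 0 ≤ b := norm_nonneg _
    have hc : 0 ≤ c := norm_nonneg _
    have hd : 0 ≤ d := norm_nonneg _
    have hB0 : 0 ≤ ‖sabraB k₀ δ u v (n + 1)‖ := norm_nonneg _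
    have h1 : ‖sabraB k₀ δ u v (n + 1)‖ ^ 2 ≤ (K * (a + b + c + d)) ^ 2 :=
      pow_le_pow_left₀ hB0 hp 2
    have h2 : (a + b + c + d) ^ 2 ≤ 4 * (a ^ 2 + b ^ 2 + c ^ 2 + d ^ 2) := by
      nlinarith [sq_nonneg (a - b), sq_nonneg (a - c), sq_nonneg (a - d), sq_nonneg (b - c),
        sq_nonneg (b - d), sq_nonneg (c - d)]
    have hTn : T n = a ^ 2 + b ^ 2 + c ^ 2 + d ^ 2 := rfl
    calc ‖sabraB k₀ δ u v (n + 1)‖ ^ 2 ≤ (K * (a + b + c + d)) ^ 2 := h1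
      _ = K ^ 2 * (a + b + c + d) ^ 2 := by ring
      _ ≤ K ^ 2 * (4 * (a ^ 2 + b ^ 2 + c ^ 2 + d ^ 2)) :=
          mul_le_mul_of_nonneg_left h2 (sq_nonneg K)
      _ = K ^ 2 * 4 * T n := by rw [hTn]; ring
  have hBsum : Summable (fun n : ℕ => ‖sabraB k₀ δ u v (n + 1)‖ ^ 2) :=
    Summable.of_nonneg_of_le (fun n => by positivity) h' (hTsummable.mul_left (K ^ 2 * 4))
  constructor
  · exact hBsum
  · have hTtsum : ∑' n : ℕ, T n ≤ 4 * ∑' n : ℕ, ‖u (n + 1)‖ ^ 2 := by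
      have e : ∑' n : ℕ, T n = (∑' n : ℕ, ‖ext u ((n : ℤ) + 1 + 2)‖ ^ 2)
          + (∑' n : ℕ, ‖ext u ((n : ℤ) + 1 + 1)‖ ^ 2)
          + (∑' n : ℕ, ‖ext u ((n : ℤ) + 1 + (-1))‖ ^ 2)
          + (∑' n : ℕ, ‖ext u ((n : ℤ) + 1 + (-2))‖ ^ 2) := by
        rw [hT]
        rw [Summable.tsum_add ((s2.add s1).add sm1) sm2, Summable.tsum_add (s2.add s1) sm1, Summable.tsum_add s2 s1]
      rw [e]
      have b2 := shift_tsum_le hu 2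
      have b1 := shift_tsum_le hu 1
      have bm1 := shift_tsum_le hu (-1)
      have bm2 := shift_tsum_le hu (-2)
      linarith
    have htsum : ∑' n : ℕ, ‖sabraB k₀ δ u v (n + 1)‖ ^ 2 ≤ K ^ 2 * 4 * ∑' n : ℕ, T n := by
      calc ∑' n : ℕ, ‖sabraB k₀ δ u v (n + 1)‖ ^ 2
          ≤ ∑' n : ℕ, K ^ 2 * 4 * T n :=
            Summable.tsum_le_tsum h' hBsum (hTsummable.mul_left (K ^ 2 * 4))
        _ = K ^ 2 * 4 * ∑' n : ℕ, T n := tsum_mul_left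
    have hNuSq : normH u ^ 2 = ∑' n : ℕ, ‖u (n + 1)‖ ^ 2 :=
      Real.sq_sqrt (tsum_nonneg fun n => by positivity)
    have hNu0 : 0 ≤ normH u := normH_nonneg u
    have hfinal : ∑' n : ℕ, ‖sabraB k₀ δ u v (n + 1)‖ ^ 2 ≤ (4 * K * normH u) ^ 2 := by
      have h3 : K ^ 2 * 4 * ∑' n : ℕ, T n ≤ K ^ 2 * 4 * (4 * normH u ^ 2) := by
        rw [hNuSq]
        have : (0 : ℝ) ≤ K ^ 2 * 4 := by positivity
        exact mul_le_mul_of_nonneg_left hTtsum this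
      calc ∑' n : ℕ, ‖sabraB k₀ δ u v (n + 1)‖ ^ 2 ≤ K ^ 2 * 4 * ∑' n : ℕ, T n := htsum
        _ ≤ K ^ 2 * 4 * (4 * normH u ^ 2) := h3
        _ = (4 * K * normH u) ^ 2 := by ring
    have : normH (sabraB k₀ δ u v) ≤ 4 * K * normH u := by
      rw [normH]
      calc Real.sqrt (∑' n : ℕ, ‖sabraB k₀ δ u v (n + 1)‖ ^ 2)
          ≤ Real.sqrt ((4 * K * normH u) ^ 2) := Real.sqrt_le_sqrt hfinal
        _ = 4 * K * normH u := Real.sqrt_sq (by positivity)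
    calc normH (sabraB k₀ δ u v) ≤ 4 * K * normH u := this
      _ = 16 * D * Nv * normH u := by rw [hK]; ring

end
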